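/- arXiv:1309.2456 — 3 statements merged into one kernel-verified Lean document; each statement's English description precedes it below -/
import Mathlib

section
/- Let M be a finite monoid. Then there exists k ∈ ℕ such that for every tuple (a₁, …, a_k) ∈ M^k, there exist indices 1 ≤ i₁ < i₂ ≤ k+1 such that the product a = a_{i₁} · a_{i₁+1} ⋯ a_{i₂−1} is idempotent, i.e. a·a = a. -/
/-!
Induction on the size of a submonoid `S` containing every letter. By pigeonhole, among the first
`|M| * (k + 1) + 1` prefix products some value `v` is taken at `k + 2` positions. If `v` is
idempotent, the prefix ending at the second of these positions is the required factor. Otherwise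
each factor between consecutive positions lies in `S ⊓ {x | v * x = v}`, a smaller submonoid since
it misses `v`, and the induction hypothesis applied to the sequence of these factors yields a run of
consecutive ones with idempotent product.
-/

section Monoid

variable {M : Type*} [Monoid M]

def segProd (a : ℕ → M) (i j : ℕ) : M := ((List.range' i (j - i)).map a).prod

section segProd

variable (a : ℕ → M)

@[simp] lemma segProd_self (i : ℕ) : segProd a i i = 1 := by simp [segProd]

lemma segProd_mul_segProd {i j k : ℕ} (hij : i ≤ j) (hjk : j ≤ k) :
    segProd a i j * segProd a j k = segProd a i k := by
  have hsplit := List.range'_append (s := i) (m := j - i) (n := k - j) (step := 1)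
  rw [one_mul, Nat.add_sub_cancel' hij, show j - i + (k - j) = k - i by omega] at hsplit
  rw [segProd, segProd, segProd, ← hsplit, List.map_append, List.prod_append]

lemma segProd_mem {S : Submonoid M} (ha : ∀ t, a t ∈ S) (i j : ℕ) : segProd a i j ∈ S :=
  S.list_prod_mem fun _ hx ↦ by
    obtain ⟨t, -, rfl⟩ := List.mem_map.1 hx
    exact ha t

lemma segProd_succ_right {i j : ℕ} (hij : i ≤ j) : segProd a i (j + 1) = segProd a i j * a j := by
  rw [← segProd_mul_segProd a hij j.le_succ]
  simp [segProd]

lemma segProd_segProd_of_monotone {p : ℕ → ℕ} (hp : Monotone p) {i j : ℕ} (hij : i ≤ j) :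
    segProd (fun t ↦ segProd a (p t) (p (t + 1))) i j = segProd a (p i) (p j) := by
  induction j, hij using Nat.le_induction with
  | base => simp
  | succ j hij ih =>
    rw [segProd_succ_right _ hij, ih, segProd_mul_segProd a (hp hij) (hp j.le_succ)]

end segProd

def Submonoid.rightStabilizer (v : M) : Submonoid M where
  carrier := {x | v * x = v}
  one_mem' := mul_one v
  mul_mem' {x y} (hx : v * x = v) (hy : v * y = v) := show v * (x * y) = v by
    rw [← mul_assoc, hx, hy]

end Monoid

lemma exists_monotone_fiber {α : Type*} [Fintype α] (f : ℕ → α) (m : ℕ) :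
    ∃ v, ∃ p : ℕ → ℕ, Monotone p ∧ StrictMonoOn p (Set.Iic m) ∧
      (∀ t, p t ≤ Fintype.card α * m) ∧ ∀ t, f (p t) = v := by
  classical
  have hcard :
      (Finset.univ : Finset α).card * m < (Finset.range (Fintype.card α * m + 1)).card := by
    simp
  obtain ⟨v, -, hv⟩ := Finset.exists_lt_card_fiber_of_mul_lt_card_of_maps_to
    (fun t _ ↦ Finset.mem_univ (f t)) hcard
  obtain ⟨F, hF, hFcard⟩ := Finset.exists_subset_card_eq hv
  set e := F.orderEmbOfFin hFcard
  have he : ∀ t, e t ∈ Finset.range _ ∧ f (e t) = v := fun t ↦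
    Finset.mem_filter.1 (hF (F.orderEmbOfFin_mem hFcard t))
  refine ⟨v, fun t ↦ e (Fin.clamp t m), fun s t hst ↦ e.monotone ?_,
    fun s hs t ht hst ↦ e.strictMono ?_, fun t ↦ Nat.lt_succ_iff.1 (Finset.mem_range.1 (he _).1),
    fun t ↦ (he _).2⟩
  · exact Fin.mk_le_mk.2 (min_le_min_right m hst)
  · simp only [Set.mem_Iic] at hs ht
    simp [Fin.clamp, Fin.lt_def, min_eq_left hs, min_eq_left ht, hst]

theorem exists_isIdempotentElem_segProd_of_card_le (M : Type*) [Monoid M] [Fintype M] (n : ℕ) :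
    ∃ k, ∀ S : Submonoid M, Nat.card S ≤ n → ∀ a : ℕ → M, (∀ t, a t ∈ S) →
      ∃ i j, i < j ∧ j ≤ k ∧ IsIdempotentElem (segProd a i j) := by
  induction n with
  | zero => exact ⟨0, fun S hS ↦ absurd hS (Nat.card_pos (α := S)).not_ge⟩
  | succ n ih =>
    obtain ⟨k, hk⟩ := ih
    refine ⟨Fintype.card M * (k + 1), fun S hS a ha ↦ ?_⟩
    obtain ⟨v, p, hp, hpm, hpk, hpv⟩ := exists_monotone_fiber (segProd a 0) (k + 1)
    have hp01 : p 0 < p 1 := hpm (by simp) (by simp) zero_lt_one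
    by_cases hv : IsIdempotentElem v
    · refine ⟨0, p 1, by omega, hpk 1, ?_⟩
      rwa [hpv]
    let T := S ⊓ Submonoid.rightStabilizer v
    have hvS : v ∈ S := hpv 0 ▸ segProd_mem a ha 0 (p 0)
    have hTS : Nat.card T < Nat.card S :=
      Set.Finite.card_lt_card (Set.toFinite _) <| SetLike.coe_ssubset_coe.2 <|
        SetLike.lt_iff_le_and_exists.2 ⟨inf_le_left, v, hvS, fun hvT ↦ hv hvT.2⟩
    have hbT : ∀ t, segProd a (p t) (p (t + 1)) ∈ T := fun t ↦
      ⟨segProd_mem a ha _ _, by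
        show v * _ = v
        rw [← hpv t, segProd_mul_segProd a (Nat.zero_le _) (hp t.le_succ), hpv, hpv]⟩
    obtain ⟨i, j, hij, hjk, hidem⟩ := hk T (by omega) _ hbT
    refine ⟨p i, p j, hpm (Set.mem_Iic.2 (by omega)) (Set.mem_Iic.2 (by omega)) hij, hpk j, ?_⟩
    rwa [← segProd_segProd_of_monotone a hp hij.le]

lemma List.drop_take_eq_map_range' {α : Type*} (l : List α) (d : α) {i j : ℕ}
    (hj : j ≤ l.length) :
    (l.drop i).take (j - i) = (List.range' i (j - i)).map (l.getD · d) := by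
  apply List.ext_getElem
  · simp only [List.length_take, List.length_drop, List.length_map, List.length_range']
    omega
  · intro t h _
    simp only [List.length_take, List.length_drop] at h
    simp [List.getElem?_eq_getElem (by omega : i + t < l.length)]

theorem stmt_1 (M : Type*) [Monoid M] [Fintype M] :
    ∃ k : ℕ, ∀ a : Fin k → M, ∃ i j : ℕ, i < j ∧ j ≤ k ∧
      (((List.ofFn a).drop i).take (j - i)).prod * (((List.ofFn a).drop i).take (j - i)).prod
        = (((List.ofFn a).drop i).take (j - i)).prod := by
  obtain ⟨k, hk⟩ := exists_isIdempotentElem_segProd_of_card_le M (Nat.card M)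
  refine ⟨k, fun a ↦ ?_⟩
  obtain ⟨i, j, hij, hjk, hidem⟩ :=
    hk ⊤ (by simp) (fun t ↦ (List.ofFn a).getD t 1) fun _ ↦ Submonoid.mem_top _
  refine ⟨i, j, hij, hjk, ?_⟩
  rwa [List.drop_take_eq_map_range' _ 1 (by simpa using hjk)]
end

section
/- Let f : X → Y be a block map between subshifts that is not surjective. Then f is not an epimorphism in the category of subshifts and block maps: there exist two distinct block maps g₀, g₁ : Y → {0,1}^ℤ with g₀ ∘ f = g₁ ∘ f. -/
/-- The shift map on bi-infinite configurations. -/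
def shift {S : Type*} (x : ℤ → S) : ℤ → S := fun i => x (i + 1)

/-- A subshift: a closed, shift-invariant subset of the full shift. -/
def IsSubshift {S : Type*} [TopologicalSpace S] (X : Set (ℤ → S)) : Prop :=
  IsClosed X ∧ shift '' X = X

/-- A block map: a continuous, shift-commuting map between subshifts. -/
def IsBlockMap {S R : Type*} [TopologicalSpace S] [TopologicalSpace R]
    (X : Set (ℤ → S)) (Y : Set (ℤ → R)) (f : (ℤ → S) → (ℤ → R)) : Prop :=
  Set.MapsTo f X Y ∧ ContinuousOn f X ∧ ∀ x ∈ X, f (shift x) = shift (f x)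

/-!
The image `f '' X` is compact, hence a closed subshift, and it misses some point `y₀ ∈ Y`.
Since the full shift is compact and totally disconnected, some clopen set `U` (a finite union
of cylinders, playing the role of the forbidden word `w`) contains `y₀` and avoids `f '' X`.
The map recording at each `i` whether the configuration shifted by `i` lies in `U` is a block
map; it vanishes on the shift-invariant set `f '' X` but not at `y₀`, so it agrees with the
zero map after `f` only.
-/

section Shift

variable {S : Type*}

def shiftBy (i : ℤ) (x : ℤ → S) : ℤ → S := fun j => x (j + i)

@[simp]
lemma shiftBy_zero (x : ℤ → S) : shiftBy 0 x = x := by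
  funext j
  simp [shiftBy]

lemma shift_shiftBy (i : ℤ) (x : ℤ → S) : shift (shiftBy i x) = shiftBy (i + 1) x := by
  funext j
  simp only [shift, shiftBy]
  ring_nf

lemma shiftBy_shift (i : ℤ) (x : ℤ → S) : shiftBy i (shift x) = shiftBy (i + 1) x := by
  funext j
  simp only [shift, shiftBy]
  ring_nf

lemma shift_injective : Function.Injective (shift (S := S)) := by
  intro x y h
  funext j
  simpa [shift] using congrFun h (j - 1)

lemma shiftBy_mem_of_shift_image_eq {A : Set (ℤ → S)} (hA : shift '' A = A)
    {x : ℤ → S} (hx : x ∈ A) (i : ℤ) : shiftBy i x ∈ A := by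
  induction i using Int.induction_on with
  | zero => simpa using hx
  | succ i ih =>
    rw [← shift_shiftBy, ← hA]
    exact Set.mem_image_of_mem shift ih
  | pred i ih =>
    rw [← hA] at ih
    obtain ⟨z, hz, hz_eq⟩ := ih
    have : z = shiftBy (-i - 1) x :=
      shift_injective (by rw [hz_eq, shift_shiftBy, sub_add_cancel])
    exact this ▸ hz

lemma continuous_shiftBy [TopologicalSpace S] (i : ℤ) : Continuous (shiftBy (S := S) i) :=
  continuous_pi fun j => continuous_apply (j + i)

end Shift

section BlockMap

variable {S R : Type*}

lemma shift_image_image_eq {X : Set (ℤ → S)} {f : (ℤ → S) → (ℤ → R)}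
    (hf : ∀ x ∈ X, f (shift x) = shift (f x)) (hX : shift '' X = X) :
    shift '' (f '' X) = f '' X := by
  rw [Set.image_image, Set.image_congr fun x hx => (hf x hx).symm, ← Set.image_image, hX]

lemma IsBlockMap.isSubshift_image [TopologicalSpace S] [TopologicalSpace R] [CompactSpace S]
    [T2Space R] {X : Set (ℤ → S)} {Y : Set (ℤ → R)} {f : (ℤ → S) → (ℤ → R)}
    (hf : IsBlockMap X Y f) (hX : IsSubshift X) :
    IsSubshift (f '' X) :=
  ⟨(hX.1.isCompact.image_of_continuousOn hf.2.1).isClosed, shift_image_image_eq hf.2.2 hX.2⟩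

lemma isBlockMap_const [TopologicalSpace R] (Y : Set (ℤ → R)) (b : Bool) :
    IsBlockMap Y (Set.univ : Set (ℤ → Bool)) fun _ _ => b :=
  ⟨Set.mapsTo_univ _ _, continuousOn_const, fun _ _ => rfl⟩

/-- The indicator sequence of the times at which the configuration lies in `U`; for a cylinder
`U = {y | y 0 = w 0, …, y (n-1) = w (n-1)}` it marks the occurrences of the word `w`. -/
noncomputable def occurrenceMap (U : Set (ℤ → R)) (y : ℤ → R) : ℤ → Bool :=
  fun i => U.boolIndicator (shiftBy i y)

lemma isBlockMap_occurrenceMap [TopologicalSpace R] {U : Set (ℤ → R)} (hU : IsClopen U)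
    (Y : Set (ℤ → R)) :
    IsBlockMap Y (Set.univ : Set (ℤ → Bool)) (occurrenceMap U) := by
  refine ⟨Set.mapsTo_univ _ _, Continuous.continuousOn ?_, fun y _ => ?_⟩
  · exact continuous_pi fun i =>
      ((continuous_boolIndicator_iff_isClopen U).mpr hU).comp (continuous_shiftBy i)
  · funext i
    simp only [occurrenceMap, shift, shiftBy_shift]

lemma occurrenceMap_apply_zero_of_mem {U : Set (ℤ → R)} {y : ℤ → R} (hy : y ∈ U) :
    occurrenceMap U y 0 = true := by
  simpa [occurrenceMap] using (U.mem_iff_boolIndicator y).mp hy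

lemma occurrenceMap_eq_false_of_subset_compl {U A : Set (ℤ → R)} (hA : shift '' A = A)
    (hUA : U ⊆ Aᶜ) {y : ℤ → R} (hy : y ∈ A) : occurrenceMap U y = fun _ => false := by
  funext i
  exact (U.notMem_iff_boolIndicator _).mp fun h => hUA h (shiftBy_mem_of_shift_image_eq hA hy i)

end BlockMap

theorem stmt_3_general {S R : Type*} [TopologicalSpace S] [Finite S]
    [TopologicalSpace R] [DiscreteTopology R] [Finite R]
    (X : Set (ℤ → S)) (Y : Set (ℤ → R)) (hX : IsSubshift X)
    (f : (ℤ → S) → (ℤ → R)) (hf : IsBlockMap X Y f) (hnsurj : f '' X ≠ Y) :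
    ∃ g₀ g₁ : (ℤ → R) → (ℤ → Bool),
      IsBlockMap Y (Set.univ : Set (ℤ → Bool)) g₀ ∧
      IsBlockMap Y (Set.univ : Set (ℤ → Bool)) g₁ ∧
      ¬ Set.EqOn g₀ g₁ Y ∧ Set.EqOn (g₀ ∘ f) (g₁ ∘ f) X := by
  have hfX : IsSubshift (f '' X) := hf.isSubshift_image hX
  obtain ⟨y₀, hy₀Y, hy₀⟩ : ∃ y ∈ Y, y ∉ f '' X :=
    Set.exists_of_ssubset (hf.1.image_subset.ssubset_of_ne hnsurj)
  obtain ⟨U, hU, hy₀U, hUfX⟩ := compact_exists_isClopen_in_isOpen hfX.1.isOpen_compl hy₀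
  refine ⟨fun _ _ => false, occurrenceMap U, isBlockMap_const Y false,
    isBlockMap_occurrenceMap hU Y, fun h => ?_, fun x hx => ?_⟩
  · simpa [occurrenceMap_apply_zero_of_mem hy₀U] using congrFun (h hy₀Y) 0
  · exact (occurrenceMap_eq_false_of_subset_compl hfX.2 hUfX ⟨x, hx, rfl⟩).symm

theorem stmt_3 {S R : Type*} [TopologicalSpace S] [DiscreteTopology S] [Finite S]
    [TopologicalSpace R] [DiscreteTopology R] [Finite R]
    (X : Set (ℤ → S)) (Y : Set (ℤ → R)) (hX : IsSubshift X) (hY : IsSubshift Y)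
    (f : (ℤ → S) → (ℤ → R)) (hf : IsBlockMap X Y f) (hnsurj : f '' X ≠ Y) :
    ∃ g₀ g₁ : (ℤ → R) → (ℤ → Bool),
      IsBlockMap Y (Set.univ : Set (ℤ → Bool)) g₀ ∧
      IsBlockMap Y (Set.univ : Set (ℤ → Bool)) g₁ ∧
      ¬ Set.EqOn g₀ g₁ Y ∧ Set.EqOn (g₀ ∘ f) (g₁ ∘ f) X :=
  stmt_3_general X Y hX f hf hnsurj
end

section
/- Let X be a subshift, f : X → X a block map, and suppose f has a surjective iterate-invariant observable in the following sense: let P be a partially ordered set, g : X → P^ℤ a block map with g(f(x))₀ ≤ g(x)₀ for all x ∈ X. If X is a subshift in which shift-periodic points are dense, then g ∘ f = g. -/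
/-!
Along an `f`-orbit the values `g (fⁿ x) 0` decrease, so on an `f`-periodic orbit they are
constant. Every shift-periodic point is `f`-periodic, because `f` permutes injectively the
finitely many points of `X` of a given shift period. Hence `g (f x) 0 = g x 0` on the dense set of
shift-periodic points, so everywhere on `X` by continuity, and two block maps that agree at
coordinate `0` agree.
-/

open Function Set

theorem Function.apply_map_eq_of_mem_periodicPts {α P : Type*} [PartialOrder P]
    {f : α → α} {φ : α → P} {x : α} (hx : x ∈ periodicPts f)
    (hle : ∀ n, φ (f (f^[n] x)) ≤ φ (f^[n] x)) : φ (f x) = φ x := by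
  obtain ⟨k, hk, hkx⟩ := hx
  have hanti : Antitone fun n => φ (f^[n] x) :=
    antitone_nat_of_succ_le fun n => by simpa only [iterate_succ_apply'] using hle n
  refine le_antisymm (hle 0) ?_
  calc φ x = φ (f^[k] x) := by rw [hkx.eq]
    _ ≤ φ (f^[1] x) := hanti hk
    _ = φ (f x) := rfl

lemma Function.Periodic.apply_emod {S : Type*} {x : ℤ → S} {p : ℤ} (h : Periodic x p) (i : ℤ) :
    x (i % p) = x i := by
  have h' := h.sub_zsmul_eq (x := i) (i / p)
  rwa [smul_eq_mul, mul_comm, ← Int.emod_def] at h'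

section Shift

variable {S : Type*}

lemma shift_iterate_apply (x : ℤ → S) (n : ℕ) (i : ℤ) : shift^[n] x i = x (i + n) := by
  induction n generalizing i with
  | zero => simp
  | succ n ih =>
    rw [iterate_succ_apply']
    change shift^[n] x (i + 1) = _
    rw [ih, Nat.cast_succ, add_assoc, add_comm 1]

lemma isPeriodicPt_shift_iff {x : ℤ → S} {p : ℕ} : IsPeriodicPt shift p x ↔ Periodic x p := by
  refine ⟨fun h i => ?_, fun h => funext fun i => ?_⟩
  · rw [← shift_iterate_apply x p i, h.eq]
  · rw [shift_iterate_apply, h]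

lemma finite_setOf_isPeriodicPt_shift [Finite S] {p : ℕ} (hp : 0 < p) :
    {x : ℤ → S | IsPeriodicPt shift p x}.Finite := by
  have hp' : (0 : ℤ) < p := by exact_mod_cast hp
  let restrictIco (x : {x : ℤ → S | IsPeriodicPt shift p x}) : Ico (0 : ℤ) p → S := fun i => x.1 i
  refine Set.finite_coe_iff.1 <| Finite.of_injective restrictIco fun x y hxy =>
    Subtype.ext <| funext fun i => ?_
  have hi : i % p ∈ Ico (0 : ℤ) p := ⟨Int.emod_nonneg i hp'.ne', Int.emod_lt_of_pos i hp'⟩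
  rw [← (isPeriodicPt_shift_iff.1 x.2).apply_emod, ← (isPeriodicPt_shift_iff.1 y.2).apply_emod]
  exact congrFun hxy ⟨_, hi⟩

end Shift

namespace IsSubshift

variable {S : Type*} [TopologicalSpace S] {X : Set (ℤ → S)}

lemma mapsTo_shift (hX : IsSubshift X) : MapsTo shift X X :=
  (mapsTo_image shift X).mono_right hX.2.subset

lemma surjOn_shift (hX : IsSubshift X) : SurjOn shift X X := hX.2.superset

end IsSubshift

namespace IsBlockMap

variable {S R T : Type*} [TopologicalSpace S] [TopologicalSpace R] [TopologicalSpace T]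
  {X : Set (ℤ → S)} {Y : Set (ℤ → R)} {Z : Set (ℤ → T)}

lemma comp {f : (ℤ → S) → (ℤ → R)} {g : (ℤ → R) → (ℤ → T)} (hg : IsBlockMap Y Z g)
    (hf : IsBlockMap X Y f) : IsBlockMap X Z (g ∘ f) :=
  ⟨hg.1.comp hf.1, hg.2.1.comp hf.2.1 hf.1, fun x hx => by
    rw [comp_apply, hf.2.2 x hx, hg.2.2 _ (hf.1 hx), comp_apply]⟩

lemma map_shift_iterate {f : (ℤ → S) → (ℤ → R)} (hf : IsBlockMap X Y f)
    (hX : MapsTo shift X X) (n : ℕ) {x : ℤ → S} (hx : x ∈ X) :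
    f (shift^[n] x) = shift^[n] (f x) := by
  induction n generalizing x with
  | zero => rfl
  | succ n ih => rw [iterate_succ_apply, iterate_succ_apply, ih (hX hx), hf.2.2 x hx]

lemma eqOn_of_apply_zero {f g : (ℤ → S) → (ℤ → R)} (hX : IsSubshift X) (hf : IsBlockMap X Y f)
    (hg : IsBlockMap X Y g) (h : ∀ x ∈ X, f x 0 = g x 0) : EqOn f g X := by
  intro x hx
  funext i
  -- for `i = a - b` and `x = shift^[b] y`, coordinate `i` of `x` is coordinate `0` of `shift^[a] y`
  obtain ⟨y, hy, rfl⟩ := hX.surjOn_shift.iterate (-i).toNat hx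
  have hi : i + (-i).toNat = 0 + ((i.toNat : ℕ) : ℤ) := by omega
  have hmaps := hX.mapsTo_shift
  rw [hf.map_shift_iterate hmaps _ hy, hg.map_shift_iterate hmaps _ hy, shift_iterate_apply,
    shift_iterate_apply, hi, ← shift_iterate_apply (f y), ← shift_iterate_apply (g y),
    ← hf.map_shift_iterate hmaps _ hy, ← hg.map_shift_iterate hmaps _ hy,
    h _ (hmaps.iterate _ hy)]

lemma isPeriodicPt_shift_map {f : (ℤ → S) → (ℤ → R)} (hf : IsBlockMap X Y f)
    (hX : MapsTo shift X X) {p : ℕ} {x : ℤ → S} (hx : x ∈ X) (hper : IsPeriodicPt shift p x) :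
    IsPeriodicPt shift p (f x) := by
  rw [IsPeriodicPt, IsFixedPt, ← hf.map_shift_iterate hX p hx, hper.eq]

lemma mem_periodicPts_of_mem_periodicPts_shift [Finite S] {f : (ℤ → S) → (ℤ → S)}
    (hX : IsSubshift X) (hf : IsBlockMap X X f) (hinj : InjOn f X) {x : ℤ → S} (hx : x ∈ X)
    (hper : x ∈ periodicPts shift) : x ∈ periodicPts f := by
  obtain ⟨p, hp, hpx⟩ := hper
  set K := X ∩ {y | IsPeriodicPt shift p y}
  have hK : MapsTo f K K := fun y hy =>
    ⟨hf.1 hy.1, hf.isPeriodicPt_shift_map hX.mapsTo_shift hy.1 hy.2⟩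
  have : Finite K := ((finite_setOf_isPeriodicPt_shift hp).inter_of_right X).to_subtype
  have hres : (⟨x, hx, hpx⟩ : K) ∈ periodicPts (hK.restrict f K K) :=
    (hK.restrict_inj.2 (hinj.mono inter_subset_left)).mem_periodicPts _
  exact (Semiconj.mapsTo_periodicPts (fun _ => rfl : Semiconj Subtype.val _ f)) hres

end IsBlockMap

theorem stmt_14_general {S P : Type*} [TopologicalSpace S] [Finite S]
    [PartialOrder P] [TopologicalSpace P] [DiscreteTopology P]
    (X : Set (ℤ → S)) (hX : IsSubshift X)
    (hdense : X ⊆ closure {x ∈ X | ∃ p : ℕ, 0 < p ∧ shift^[p] x = x})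
    (f : (ℤ → S) → (ℤ → S)) (hf : IsBlockMap X X f) (hbij : Set.BijOn f X X)
    (g : (ℤ → S) → (ℤ → P)) (hg : IsBlockMap X (Set.univ : Set (ℤ → P)) g)
    (hmono : ∀ x ∈ X, g (f x) 0 ≤ g x 0) :
    Set.EqOn (g ∘ f) g X := by
  have hgf := hg.comp hf
  refine hgf.eqOn_of_apply_zero hX hg fun x hx => ?_
  have hperiodic : EqOn (fun y => g (f y) 0) (fun y => g y 0)
      {x ∈ X | ∃ p : ℕ, 0 < p ∧ shift^[p] x = x} := fun y ⟨hy, hper⟩ =>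
    apply_map_eq_of_mem_periodicPts (φ := fun y => g y 0)
      (hf.mem_periodicPts_of_mem_periodicPts_shift hX hbij.injOn hy hper)
      fun n => hmono _ (hf.1.iterate n hy)
  exact hperiodic.of_subset_closure ((continuous_apply 0).comp_continuousOn hgf.2.1)
    ((continuous_apply 0).comp_continuousOn hg.2.1) (sep_subset _ _) hdense hx

theorem stmt_14 {S P : Type*} [TopologicalSpace S] [DiscreteTopology S] [Finite S]
    [PartialOrder P] [Finite P] [TopologicalSpace P] [DiscreteTopology P]
    (X : Set (ℤ → S)) (hX : IsSubshift X)
    (hdense : X ⊆ closure {x ∈ X | ∃ p : ℕ, 0 < p ∧ shift^[p] x = x})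
    (f : (ℤ → S) → (ℤ → S)) (hf : IsBlockMap X X f) (hbij : Set.BijOn f X X)
    (g : (ℤ → S) → (ℤ → P)) (hg : IsBlockMap X (Set.univ : Set (ℤ → P)) g)
    (hmono : ∀ x ∈ X, g (f x) 0 ≤ g x 0) :
    Set.EqOn (g ∘ f) g X :=
  stmt_14_general X hX hdense f hf hbij g hg hmono
end
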